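/- arXiv:2407.04298 — 6 statements merged into one kernel-verified Lean document; each statement's English description precedes it below -/
import Mathlib

section
/- In the setting of a holomorphic family $f:\mathcal{X}\to S$ with $\dim S = 1$ and fiberwise Kähler form $\omega$, let $v = \partial_s + a_s^\alpha \partial_\alpha$ be the horizontal lift of $\partial_s$ with respect to $\omega$ and $c(\omega) = \omega(v,\bar v)$ the geodesic curvature. Then the Lie bracket of $v$ with its conjugate satisfies $[v, \bar v] = c(\omega)^{;\alpha}\partial_\alpha - c(\omega)^{;\bar\beta}\partial_{\bar\beta}$, where indices are raised using the fiber metric $g_{\alpha\bar\beta}$, i.e. $c(\omega)^{;\alpha} = g^{\bar\beta\alpha}\partial_{\bar\beta} c(\omega)$. In particular $[v,\bar v]$ is tangent to the fibers. -/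
open scoped BigOperators

/-!
STATEMENT 4: `[v, v̄] = c(ω)^{;α} ∂_α - c(ω)^{;β̄} ∂_{β̄}` in admissible
coordinates.  We model the algebra of smooth functions on (an admissible
chart of) `𝒳` by a commutative `ℂ`-algebra `A`, the coordinate vector
fields `∂_α, ∂_{β̄}, ∂_s, ∂_{s̄}` by pairwise commuting derivations
`Dz, Dzb, Ds, Dsb`, and complex conjugation by a ring morphism `σc`
intertwining the barred and unbarred derivations.  The coefficients of the
fiberwise Kähler form `ω` are `g α β = g_{αβ̄}`, `gs β = g_{sβ̄}`,
`gsb α = g_{αs̄}`, `gss = g_{ss̄}`, with fiberwise inverse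
`ginv β α = g^{β̄α}`; the hypotheses `hc₁`–`hc₈` are the components of
`dω = 0`.  The horizontal lift is `v = ∂_s + a^α ∂_α` with
`a^α = -g_{sβ̄} g^{β̄α}`, `v̄ = ∂_{s̄} + ā^β ∂_{β̄}`, and the geodesic
curvature is `c = g_{ss̄} - g_{sβ̄} g^{β̄α} g_{αs̄}`.  The conclusion
computes the commutator `[v,v̄]` applied to any function `f`:
`[v,v̄] f = (Σ_α c^{;α} ∂_α f) - (Σ_β c^{;β̄} ∂_{β̄} f)` with
`c^{;α} = Σ_β g^{β̄α} ∂_{β̄} c` and `c^{;β̄} = Σ_α g^{β̄α} ∂_α c`;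
in particular `[v,v̄]` is tangent to the fibers.
-/
theorem stmt_4 (n : ℕ) (A : Type*) [CommRing A] [Algebra ℂ A]
    (Dz Dzb : Fin n → Derivation ℂ A A) (Ds Dsb : Derivation ℂ A A)
    (hcomm : ∀ D₁ D₂ : Derivation ℂ A A,
      D₁ ∈ insert Ds (insert Dsb (Set.range Dz ∪ Set.range Dzb)) →
      D₂ ∈ insert Ds (insert Dsb (Set.range Dz ∪ Set.range Dzb)) →
      ∀ f, D₁ (D₂ f) = D₂ (D₁ f))
    (g ginv : Fin n → Fin n → A) (gs gsb : Fin n → A) (gss : A)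
    (hinv₁ : ∀ α γ, (∑ β, g α β * ginv β γ) = if α = γ then 1 else 0)
    (hinv₂ : ∀ β δ, (∑ α, ginv β α * g α δ) = if β = δ then 1 else 0)
    -- components of dω = 0
    (hc₁ : ∀ α β γ, Dz γ (g α β) = Dz α (g γ β))
    (hc₂ : ∀ α β, Ds (g α β) = Dz α (gs β))
    (hc₃ : ∀ α β δ, Dzb δ (g α β) = Dzb β (g α δ))
    (hc₄ : ∀ α β, Dsb (g α β) = Dzb β (gsb α))
    (hc₅ : ∀ β δ, Dzb δ (gs β) = Dzb β (gs δ))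
    (hc₆ : ∀ α γ, Dz γ (gsb α) = Dz α (gsb γ))
    (hc₇ : ∀ α, Dz α gss = Ds (gsb α))
    (hc₈ : ∀ β, Dzb β gss = Dsb (gs β))
    -- conjugation
    (σc : A →+* A)
    (hσσ : ∀ f, σc (σc f) = f)
    (hσDz : ∀ α f, σc (Dz α f) = Dzb α (σc f))
    (hσDs : ∀ f, σc (Ds f) = Dsb (σc f))
    (hσg : ∀ α β, σc (g α β) = g β α)
    (hσginv : ∀ β α, σc (ginv β α) = ginv α β)
    (hσgs : ∀ β, σc (gs β) = gsb β)
    (hσgss : σc gss = gss)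
    -- horizontal lift coefficients and geodesic curvature
    (a ab : Fin n → A) (c : A)
    (ha : ∀ α, a α = -∑ β, gs β * ginv β α)
    (hab : ∀ β, ab β = σc (a β))
    (hcdef : c = gss - ∑ β, ∑ α, gs β * ginv β α * gsb α) :
    ∀ f : A,
      (Ds (Dsb f + ∑ β, ab β * Dzb β f) + ∑ α, a α * Dz α (Dsb f + ∑ β, ab β * Dzb β f))
        - (Dsb (Ds f + ∑ α, a α * Dz α f) + ∑ β, ab β * Dzb β (Ds f + ∑ α, a α * Dz α f))
      = (∑ α, (∑ β, ginv β α * Dzb β c) * Dz α f)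
        - (∑ β, (∑ α, ginv β α * Dz α c) * Dzb β f) := by
  clear hc₁ hc₂ hc₆ hc₇
  -- conjugation helpers
  have hσDzb : ∀ α x, σc (Dzb α x) = Dz α (σc x) := by
    intro α x
    have h := hσDz α (σc x)
    rw [hσσ] at h
    calc σc (Dzb α x) = σc (σc (Dz α (σc x))) := by rw [h]
      _ = Dz α (σc x) := hσσ _
  have hσDsb : ∀ x, σc (Dsb x) = Ds (σc x) := by
    intro x
    have h := hσDs (σc x)
    rw [hσσ] at h
    calc σc (Dsb x) = σc (σc (Ds (σc x))) := by rw [h]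
      _ = Ds (σc x) := hσσ _
  have hσgsb : ∀ α, σc (gsb α) = gs α := by
    intro α; rw [← hσgs, hσσ]
  -- formula for ab
  have hab' : ∀ β, ab β = -∑ γ, gsb γ * ginv β γ := by
    intro β
    rw [hab, ha, map_neg, map_sum]
    congr 1
    refine Finset.sum_congr rfl fun γ _ => ?_
    rw [map_mul, hσgs, hσginv]
  -- key linear relations
  have L1 : ∀ δ, (∑ α, a α * g α δ) = -gs δ := by
    intro δ
    calc ∑ α, a α * g α δ = ∑ α, -∑ β, gs β * ginv β α * g α δ := by
          refine Finset.sum_congr rfl fun α _ => ?_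
          rw [ha α]; rw [neg_mul, Finset.sum_mul]
      _ = -∑ α, ∑ β, gs β * ginv β α * g α δ := by rw [Finset.sum_neg_distrib]
      _ = -∑ β, gs β * ∑ α, ginv β α * g α δ := by
          rw [Finset.sum_comm]
          congr 1
          refine Finset.sum_congr rfl fun β _ => ?_
          rw [Finset.mul_sum]
          exact Finset.sum_congr rfl fun α _ => by ring
      _ = -gs δ := by
          simp [hinv₂, mul_ite]
  have L2 : ∀ α, (∑ β, g α β * ab β) = -gsb α := by
    intro α
    calc ∑ β, g α β * ab β = ∑ β, -∑ γ, g α β * ginv β γ * gsb γ := by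
          refine Finset.sum_congr rfl fun β _ => ?_
          rw [hab' β, mul_neg, Finset.mul_sum]
          congr 1
          exact Finset.sum_congr rfl fun γ _ => by ring
      _ = -∑ β, ∑ γ, g α β * ginv β γ * gsb γ := by rw [Finset.sum_neg_distrib]
      _ = -∑ γ, (∑ β, g α β * ginv β γ) * gsb γ := by
          rw [Finset.sum_comm]
          congr 1
          refine Finset.sum_congr rfl fun γ _ => ?_
          rw [Finset.sum_mul]
      _ = -gsb α := by
          simp [hinv₁, ite_mul]
  have L3 : c = gss + ∑ α, a α * gsb α := by
    rw [hcdef]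
    have : ∑ α, a α * gsb α = -∑ β, ∑ α, gs β * ginv β α * gsb α := by
      calc ∑ α, a α * gsb α = ∑ α, -∑ β, gs β * ginv β α * gsb α := by
            refine Finset.sum_congr rfl fun α _ => ?_
            rw [ha α, neg_mul, Finset.sum_mul]
        _ = -∑ α, ∑ β, gs β * ginv β α * gsb α := by rw [Finset.sum_neg_distrib]
        _ = -∑ β, ∑ α, gs β * ginv β α * gsb α := by rw [Finset.sum_comm]
    rw [this]; ring
  have hσc : σc c = c := by
    rw [hcdef, map_sub, hσgss, map_sum]
    congr 1
    calc ∑ β, σc (∑ α, gs β * ginv β α * gsb α)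
        = ∑ β, ∑ α, gsb β * ginv α β * gs α := by
          refine Finset.sum_congr rfl fun β _ => ?_
          rw [map_sum]
          refine Finset.sum_congr rfl fun α _ => ?_
          rw [map_mul, map_mul, hσgs, hσginv, hσgsb]
      _ = ∑ α, ∑ β, gsb β * ginv α β * gs α := Finset.sum_comm
      _ = ∑ β, ∑ α, gs β * ginv β α * gsb α := by
          refine Finset.sum_congr rfl fun α _ => ?_
          exact Finset.sum_congr rfl fun β _ => by ring
  -- derivative of L1
  have hD : ∀ (D : Derivation ℂ A A) δ,
      (∑ α, D (a α) * g α δ) = -D (gs δ) - ∑ α, a α * D (g α δ) := by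
    intro D δ
    have h := congrArg (fun x => D x) (L1 δ)
    simp only [map_sum, map_neg, Derivation.leibniz, smul_eq_mul,
      Finset.sum_add_distrib] at h
    have h2 : ∑ α, D (a α) * g α δ = ∑ α, g α δ * D (a α) :=
      Finset.sum_congr rfl fun _ _ => mul_comm _ _
    rw [h2]
    linear_combination h
  -- the key computation: ∑_α (v̄ a^α) g_{αδ̄} = -∂_{δ̄} c
  have KLmul : ∀ δ, (∑ α, (Dsb (a α) + ∑ β, ab β * Dzb β (a α)) * g α δ)
      = -(Dzb δ c) := by
    intro δ
    have split : (∑ α, (Dsb (a α) + ∑ β, ab β * Dzb β (a α)) * g α δ)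
        = (∑ α, Dsb (a α) * g α δ) + ∑ β, ab β * ∑ α, Dzb β (a α) * g α δ := by
      simp only [add_mul, Finset.sum_add_distrib, Finset.sum_mul, Finset.mul_sum]
      congr 1
      rw [Finset.sum_comm]
      exact Finset.sum_congr rfl fun _ _ => Finset.sum_congr rfl fun _ _ => by ring
    have e2 : ∑ β, ab β * ∑ α, Dzb β (a α) * g α δ
        = ∑ β, ab β * (-Dzb δ (gs β) - ∑ α, a α * Dzb δ (g α β)) := by
      refine Finset.sum_congr rfl fun β _ => ?_
      rw [hD (Dzb β) δ, hc₅ δ β,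
        show (∑ α, a α * Dzb β (g α δ)) = ∑ α, a α * Dzb δ (g α β) from
          Finset.sum_congr rfl fun α _ => by rw [hc₃ α δ β]]
    have e1 : (∑ α, Dsb (a α) * g α δ)
        = -(Dzb δ gss) - ∑ α, a α * Dzb δ (gsb α) := by
      rw [hD Dsb δ, ← hc₈ δ,
        show (∑ α, a α * Dsb (g α δ)) = ∑ α, a α * Dzb δ (gsb α) from
          Finset.sum_congr rfl fun α _ => by rw [hc₄ α δ]]
    have hdc : Dzb δ c = Dzb δ gss
        + ∑ α, (a α * Dzb δ (gsb α) + gsb α * Dzb δ (a α)) := by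
      rw [L3, map_add, map_sum]
      congr 1
      exact Finset.sum_congr rfl fun α _ => by
        rw [Derivation.leibniz, smul_eq_mul, smul_eq_mul]
    have AUX : ∑ α, gsb α * Dzb δ (a α)
        = ∑ β, ab β * Dzb δ (gs β) + ∑ β, ab β * ∑ α, a α * Dzb δ (g α β) := by
      have st1 : ∑ α, gsb α * Dzb δ (a α)
          = -∑ β, ab β * ∑ α, Dzb δ (a α) * g α β := by
        calc ∑ α, gsb α * Dzb δ (a α)
            = ∑ α, -∑ β, (g α β * ab β) * Dzb δ (a α) := by
              refine Finset.sum_congr rfl fun α _ => ?_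
              have h := L2 α
              rw [← Finset.sum_mul]
              linear_combination (Dzb δ (a α)) * h
          _ = -∑ α, ∑ β, (g α β * ab β) * Dzb δ (a α) := by
              rw [Finset.sum_neg_distrib]
          _ = -∑ β, ab β * ∑ α, Dzb δ (a α) * g α β := by
              congr 1
              rw [Finset.sum_comm]
              refine Finset.sum_congr rfl fun β _ => ?_
              rw [Finset.mul_sum]
              exact Finset.sum_congr rfl fun α _ => by ring
      rw [st1]
      have st2 : ∑ β, ab β * ∑ α, Dzb δ (a α) * g α β
          = ∑ β, ab β * (-Dzb δ (gs β) - ∑ α, a α * Dzb δ (g α β)) :=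
        Finset.sum_congr rfl fun β _ => by rw [hD (Dzb δ) β]
      rw [st2]
      have st3 : ∑ β, ab β * (-Dzb δ (gs β) - ∑ α, a α * Dzb δ (g α β))
          = ∑ β, (-(ab β * Dzb δ (gs β)) - ab β * ∑ α, a α * Dzb δ (g α β)) :=
        Finset.sum_congr rfl fun β _ => by ring
      rw [st3, Finset.sum_sub_distrib, Finset.sum_neg_distrib]
      ring
    have expand : ∑ α, (a α * Dzb δ (gsb α) + gsb α * Dzb δ (a α))
        = ∑ α, a α * Dzb δ (gsb α) + ∑ α, gsb α * Dzb δ (a α) :=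
      Finset.sum_add_distrib
    have e2' : ∑ β, ab β * (-Dzb δ (gs β) - ∑ α, a α * Dzb δ (g α β))
        = -(∑ β, ab β * Dzb δ (gs β)) - ∑ β, ab β * ∑ α, a α * Dzb δ (g α β) := by
      have : ∑ β, ab β * (-Dzb δ (gs β) - ∑ α, a α * Dzb δ (g α β))
          = ∑ β, (-(ab β * Dzb δ (gs β)) - ab β * ∑ α, a α * Dzb δ (g α β)) :=
        Finset.sum_congr rfl fun β _ => by ring
      rw [this, Finset.sum_sub_distrib, Finset.sum_neg_distrib]
    rw [split, e1, e2, e2', hdc, expand, AUX]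
    ring
  -- invert the metric: the formula for v̄ a^γ
  have KL : ∀ γ, Dsb (a γ) + ∑ β, ab β * Dzb β (a γ)
      = -∑ β, ginv β γ * Dzb β c := by
    intro γ
    have h1 : Dsb (a γ) + ∑ β, ab β * Dzb β (a γ)
        = ∑ α, (Dsb (a α) + ∑ β, ab β * Dzb β (a α))
            * (if α = γ then 1 else 0) := by
      simp
    rw [h1]
    calc ∑ α, (Dsb (a α) + ∑ β, ab β * Dzb β (a α)) * (if α = γ then 1 else 0)
        = ∑ α, (Dsb (a α) + ∑ β, ab β * Dzb β (a α)) * ∑ δ, g α δ * ginv δ γ := by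
          refine Finset.sum_congr rfl fun α _ => ?_
          rw [hinv₁ α γ]
      _ = ∑ δ, (∑ α, (Dsb (a α) + ∑ β, ab β * Dzb β (a α)) * g α δ) * ginv δ γ := by
          simp only [Finset.mul_sum, Finset.sum_mul]
          rw [Finset.sum_comm]
          exact Finset.sum_congr rfl fun δ _ =>
            Finset.sum_congr rfl fun α _ => by ring
      _ = ∑ δ, (-(Dzb δ c)) * ginv δ γ := by
          refine Finset.sum_congr rfl fun δ _ => ?_
          rw [KLmul δ]
      _ = -∑ β, ginv β γ * Dzb β c := by
          rw [← Finset.sum_neg_distrib]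
          exact Finset.sum_congr rfl fun β _ => by ring
  -- conjugate formula for v a^β̄
  have KL' : ∀ β, Ds (ab β) + ∑ α, a α * Dz α (ab β)
      = -∑ α, ginv β α * Dz α c := by
    intro β
    have h := congrArg σc (KL β)
    rw [map_add, map_sum, map_neg, map_sum, hσDsb, ← hab] at h
    calc Ds (ab β) + ∑ α, a α * Dz α (ab β)
        = σc (Dsb (a β)) + ∑ γ, σc (ab γ * Dzb γ (a β)) := by
          rw [hσDsb, ← hab]
          congr 1
          refine Finset.sum_congr rfl fun γ _ => ?_
          rw [map_mul, hσDzb, ← hab, show σc (ab γ) = a γ from by rw [hab, hσσ]]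
      _ = σc (Dsb (a β) + ∑ γ, ab γ * Dzb γ (a β)) := by rw [map_add, map_sum]
      _ = σc (-∑ γ, ginv γ β * Dzb γ c) := by rw [KL β]
      _ = -∑ γ, ginv β γ * Dz γ c := by
          rw [map_neg, map_sum]
          congr 1
          refine Finset.sum_congr rfl fun γ _ => ?_
          rw [map_mul, hσginv, hσDzb, hσc]
  -- commutation of coordinate derivations
  have mems : Ds ∈ insert Ds (insert Dsb (Set.range Dz ∪ Set.range Dzb)) := by simp
  have memsb : Dsb ∈ insert Ds (insert Dsb (Set.range Dz ∪ Set.range Dzb)) := by simp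
  have memz : ∀ α, Dz α ∈ insert Ds (insert Dsb (Set.range Dz ∪ Set.range Dzb)) := by
    intro α; simp [Set.mem_insert_iff]
  have memzb : ∀ β, Dzb β ∈ insert Ds (insert Dsb (Set.range Dz ∪ Set.range Dzb)) := by
    intro β; simp [Set.mem_insert_iff]
  have hDsDsb : ∀ x, Ds (Dsb x) = Dsb (Ds x) := fun x => hcomm _ _ mems memsb x
  have hDzDsb : ∀ α x, Dz α (Dsb x) = Dsb (Dz α x) := fun α x => hcomm _ _ (memz α) memsb x
  have hDsDzb : ∀ β x, Ds (Dzb β x) = Dzb β (Ds x) := fun β x => hcomm _ _ mems (memzb β) x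
  have hDzDzb : ∀ α β x, Dz α (Dzb β x) = Dzb β (Dz α x) :=
    fun α β x => hcomm _ _ (memz α) (memzb β) x
  intro f
  -- expansion of the commutator
  have E : (Ds (Dsb f + ∑ β, ab β * Dzb β f)
        + ∑ α, a α * Dz α (Dsb f + ∑ β, ab β * Dzb β f))
      - (Dsb (Ds f + ∑ α, a α * Dz α f)
        + ∑ β, ab β * Dzb β (Ds f + ∑ α, a α * Dz α f))
      = (∑ β, (Ds (ab β) + ∑ α, a α * Dz α (ab β)) * Dzb β f)
        - ∑ α, (Dsb (a α) + ∑ β, ab β * Dzb β (a α)) * Dz α f := by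
    simp only [map_add, map_sum, Derivation.leibniz, smul_eq_mul, hDsDsb, hDzDsb,
      hDsDzb, hDzDzb, mul_add, Finset.mul_sum, add_mul, Finset.sum_mul,
      Finset.sum_add_distrib]
    have q1 : (∑ β, Dzb β f * Ds (ab β)) = ∑ β, Ds (ab β) * Dzb β f :=
      Finset.sum_congr rfl fun _ _ => mul_comm _ _
    have q2 : (∑ α, ∑ β, a α * (Dzb β f * Dz α (ab β)))
        = ∑ β, ∑ α, a α * Dz α (ab β) * Dzb β f := by
      rw [Finset.sum_comm]
      exact Finset.sum_congr rfl fun β _ => Finset.sum_congr rfl fun α _ => by ring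
    have q3 : (∑ α, ∑ β, a α * (ab β * Dzb β (Dz α f)))
        = ∑ β, ∑ α, ab β * (a α * Dzb β (Dz α f)) := by
      rw [Finset.sum_comm]
      exact Finset.sum_congr rfl fun β _ => Finset.sum_congr rfl fun α _ => by ring
    have q4 : (∑ α, Dz α f * Dsb (a α)) = ∑ α, Dsb (a α) * Dz α f :=
      Finset.sum_congr rfl fun _ _ => mul_comm _ _
    have q5 : (∑ β, ∑ α, ab β * (Dz α f * Dzb β (a α)))
        = ∑ α, ∑ β, ab β * Dzb β (a α) * Dz α f := by
      rw [Finset.sum_comm]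
      exact Finset.sum_congr rfl fun α _ => Finset.sum_congr rfl fun β _ => by ring
    rw [q1, q2, q3, q4, q5]
    ring
  rw [E]
  have r1 : ∑ β, (Ds (ab β) + ∑ α, a α * Dz α (ab β)) * Dzb β f
      = -∑ β, (∑ α, ginv β α * Dz α c) * Dzb β f := by
    rw [← Finset.sum_neg_distrib]
    refine Finset.sum_congr rfl fun β _ => ?_
    rw [KL' β]; ring
  have r2 : ∑ α, (Dsb (a α) + ∑ β, ab β * Dzb β (a α)) * Dz α f
      = -∑ α, (∑ β, ginv β α * Dzb β c) * Dz α f := by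
    rw [← Finset.sum_neg_distrib]
    refine Finset.sum_congr rfl fun α _ => ?_
    rw [KL α]; ring
  rw [r1, r2]
  ring
end

section
/- Let $v$ be the horizontal lift of $\partial_s$ with respect to a $d$-closed real $(1,1)$-form $\omega$ on the total space of a family $f:\mathcal{X}\to S$ restricting to Kähler forms on fibers. Then the Lie derivative $L_v \omega$ vanishes; in particular the Lie derivative of the relative volume form $dV_s = \omega^n/n!|_{\mathcal{X}_s}$ along $v$ vanishes. -/
open scoped BigOperators

/-!
STATEMENT 5: `L_v ω = 0` for the horizontal lift `v`, in admissible
coordinates (same coordinate model as in STATEMENT 4: `A` is the algebra of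
smooth functions, `Dz, Dzb, Ds, Dsb` the commuting coordinate derivations,
`g α β = g_{αβ̄}`, `gs β = g_{sβ̄}`, `ginv β α = g^{β̄α}` the fiberwise
inverse, `dω = 0` encoded componentwise, and `v = ∂_s + a^α ∂_α` with
`a^α = -g_{sβ̄} g^{β̄α}`).  The conclusions are the vanishing of the fiber
components of the Lie derivative `L_v ω`:
(1) `(L_v ω)(∂_α, ∂_{β̄}) = v(g_{αβ̄}) + (∂_α a^γ) g_{γβ̄} = 0`;
(2) `(L_v ω)(∂_{ᾱ}, ∂_{β̄}) = (∂_{ᾱ} a^γ) g_{γβ̄} - (∂_{β̄} a^γ) g_{γᾱ} = 0`;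
and in particular (3) the Lie derivative of the relative volume form
`dV_s = ω^n/n!|_{𝒳_s} = det(g) dz ∧ dz̄` vanishes:
`v(det g) + det g · Σ_γ ∂_γ a^γ = 0`.
-/

lemma derivation_finset_prod {A : Type*} [CommRing A] [Algebra ℂ A]
    (D : Derivation ℂ A A) {ι : Type*} [DecidableEq ι] (s : Finset ι) (f : ι → A) :
    D (∏ i ∈ s, f i) = ∑ i ∈ s, (∏ j ∈ s.erase i, f j) * D (f i) := by
  classical
  induction s using Finset.induction_on with
  | empty => simp
  | insert x s hx ih =>
    rw [Finset.prod_insert hx, D.leibniz, smul_eq_mul, smul_eq_mul, ih,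
      Finset.sum_insert hx, Finset.erase_insert hx, Finset.mul_sum, add_comm]
    congr 1
    refine Finset.sum_congr rfl fun i hi => ?_
    rw [Finset.erase_insert_of_ne (fun h : x = i => hx (h ▸ hi)),
      Finset.prod_insert (fun h => hx (Finset.mem_of_mem_erase h)), mul_assoc]

lemma derivation_det {n : ℕ} {A : Type*} [CommRing A] [Algebra ℂ A]
    (D : Derivation ℂ A A) (M : Matrix (Fin n) (Fin n) A) :
    D M.det = ∑ j, (M.updateCol j (fun i => D (M i j))).det := by
  rw [Matrix.det_apply, map_sum]
  simp_rw [Matrix.det_apply]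
  rw [Finset.sum_comm]
  refine Finset.sum_congr rfl fun σ _ => ?_
  rw [Units.smul_def, map_zsmul, derivation_finset_prod, Finset.smul_sum]
  refine Finset.sum_congr rfl fun j _ => ?_
  rw [Units.smul_def]
  congr 1
  have hcongr : ∀ i ∈ Finset.univ.erase j,
      (M.updateCol j (fun i => D (M i j))) (σ i) i = M (σ i) i := by
    intro i hi
    rw [Matrix.updateCol_apply, if_neg (Finset.ne_of_mem_erase hi)]
  rw [← Finset.mul_prod_erase _ _ (Finset.mem_univ j), Finset.prod_congr rfl hcongr,
    Matrix.updateCol_apply, if_pos rfl, mul_comm]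

open Matrix in
lemma derivation_det_inv {n : ℕ} {A : Type*} [CommRing A] [Algebra ℂ A]
    (D : Derivation ℂ A A) (g ginv : Fin n → Fin n → A)
    (hinv₂ : ∀ β δ, (∑ α, ginv β α * g α δ) = if β = δ then 1 else 0) :
    D (Matrix.of g).det
      = (Matrix.of g).det * ∑ β, ∑ α, ginv β α * D (g α β) := by
  classical
  have hGi : (Matrix.of ginv) * (Matrix.of g) = 1 := by
    ext β δ
    simpa [Matrix.mul_apply, Matrix.one_apply] using hinv₂ β δ
  have hcr : ∀ c : Fin n → A,
      Matrix.cramer (Matrix.of g) c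
        = (Matrix.of ginv) *ᵥ ((Matrix.of g).det • c) := by
    intro c
    conv_lhs => rw [← Matrix.one_mulVec (Matrix.cramer (Matrix.of g) c)]
    rw [← hGi, ← Matrix.mulVec_mulVec, Matrix.mulVec_cramer]
  rw [derivation_det]
  have : ∀ j, ((Matrix.of g).updateCol j (fun i => D (Matrix.of g i j))).det
      = (Matrix.of g).det * ∑ α, ginv j α * D (g α j) := by
    intro j
    have := congrFun (hcr (fun i => D (Matrix.of g i j))) j
    rw [Matrix.cramer_apply] at this
    rw [this]
    simp [Matrix.mulVec, dotProduct, Finset.mul_sum, mul_left_comm]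
  simp_rw [this, ← Finset.mul_sum]

theorem stmt_5 (n : ℕ) (A : Type*) [CommRing A] [Algebra ℂ A]
    (Dz Dzb : Fin n → Derivation ℂ A A) (Ds Dsb : Derivation ℂ A A)
    (hcomm : ∀ D₁ D₂ : Derivation ℂ A A,
      D₁ ∈ insert Ds (insert Dsb (Set.range Dz ∪ Set.range Dzb)) →
      D₂ ∈ insert Ds (insert Dsb (Set.range Dz ∪ Set.range Dzb)) →
      ∀ f, D₁ (D₂ f) = D₂ (D₁ f))
    (g ginv : Fin n → Fin n → A) (gs gsb : Fin n → A) (gss : A)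
    (hinv₁ : ∀ α γ, (∑ β, g α β * ginv β γ) = if α = γ then 1 else 0)
    (hinv₂ : ∀ β δ, (∑ α, ginv β α * g α δ) = if β = δ then 1 else 0)
    (hc₁ : ∀ α β γ, Dz γ (g α β) = Dz α (g γ β))
    (hc₂ : ∀ α β, Ds (g α β) = Dz α (gs β))
    (hc₃ : ∀ α β δ, Dzb δ (g α β) = Dzb β (g α δ))
    (hc₄ : ∀ α β, Dsb (g α β) = Dzb β (gsb α))
    (hc₅ : ∀ β δ, Dzb δ (gs β) = Dzb β (gs δ))
    (a : Fin n → A)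
    (ha : ∀ α, a α = -∑ β, gs β * ginv β α) :
    (∀ α β, Ds (g α β) + (∑ γ, a γ * Dz γ (g α β)) + (∑ γ, Dz α (a γ) * g γ β) = 0)
    ∧ (∀ α β, (∑ γ, Dzb α (a γ) * g γ β) = ∑ γ, Dzb β (a γ) * g γ α)
    ∧ (Ds (Matrix.of g).det + (∑ γ, a γ * Dz γ (Matrix.of g).det)
        + (Matrix.of g).det * ∑ γ, Dz γ (a γ) = 0) := by
  classical
  -- ∑_γ a^γ g_{γβ̄} = -g_{sβ̄}
  have hsumag : ∀ β, (∑ γ, a γ * g γ β) = - gs β := by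
    intro β
    calc (∑ γ, a γ * g γ β)
        = -∑ γ, ∑ δ, gs δ * (ginv δ γ * g γ β) := by
          simp_rw [ha, neg_mul, Finset.sum_mul, mul_assoc, Finset.sum_neg_distrib]
      _ = -∑ δ, gs δ * ∑ γ, ginv δ γ * g γ β := by
          rw [Finset.sum_comm]
          simp_rw [Finset.mul_sum]
      _ = - gs β := by
          simp_rw [hinv₂]
          simp
  -- part (1)
  have part1 : ∀ α β, Ds (g α β) + (∑ γ, a γ * Dz γ (g α β))
      + (∑ γ, Dz α (a γ) * g γ β) = 0 := by
    intro α β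
    have h := congrArg (Dz α) (hsumag β)
    rw [map_sum, map_neg] at h
    simp only [Derivation.leibniz, smul_eq_mul] at h
    rw [← hc₂ α β, Finset.sum_add_distrib] at h
    have e1 : (∑ γ, a γ * Dz α (g γ β)) = ∑ γ, a γ * Dz γ (g α β) :=
      Finset.sum_congr rfl fun γ _ => by rw [hc₁ γ β α]
    have e2 : (∑ γ, g γ β * Dz α (a γ)) = ∑ γ, Dz α (a γ) * g γ β :=
      Finset.sum_congr rfl fun γ _ => mul_comm _ _
    rw [e1, e2] at h
    linear_combination h
  refine ⟨part1, ?_, ?_⟩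
  -- part (2)
  · intro α β
    have h1 := congrArg (Dzb α) (hsumag β)
    have h2 := congrArg (Dzb β) (hsumag α)
    rw [map_sum, map_neg] at h1 h2
    simp only [Derivation.leibniz, smul_eq_mul] at h1 h2
    rw [Finset.sum_add_distrib] at h1 h2
    rw [hc₅ β α] at h1
    have e1 : (∑ γ, a γ * Dzb α (g γ β)) = ∑ γ, a γ * Dzb β (g γ α) :=
      Finset.sum_congr rfl fun γ _ => by rw [hc₃ γ β α]
    have e2 : (∑ γ, g γ β * Dzb α (a γ)) = ∑ γ, Dzb α (a γ) * g γ β :=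
      Finset.sum_congr rfl fun γ _ => mul_comm _ _
    have e3 : (∑ γ, g γ α * Dzb β (a γ)) = ∑ γ, Dzb β (a γ) * g γ α :=
      Finset.sum_congr rfl fun γ _ => mul_comm _ _
    rw [e1, e2] at h1
    rw [e3] at h2
    linear_combination h1 - h2
  -- part (3)
  · set d : A := (Matrix.of g).det with hd
    have key : ∀ D : Derivation ℂ A A,
        D d = d * ∑ β, ∑ α, ginv β α * D (g α β) := fun D =>
      derivation_det_inv D g ginv hinv₂
    have htriple : (∑ β, ∑ α, ginv β α * (∑ γ, Dz α (a γ) * g γ β))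
        = ∑ γ, Dz γ (a γ) := by
      have step : ∀ β, (∑ α, ginv β α * (∑ γ, Dz α (a γ) * g γ β))
          = ∑ α, ∑ γ, Dz α (a γ) * (g γ β * ginv β α) := by
        intro β
        refine Finset.sum_congr rfl fun α _ => ?_
        rw [Finset.mul_sum]
        exact Finset.sum_congr rfl fun γ _ => by ring
      simp_rw [step]
      rw [Finset.sum_comm]
      have step2 : ∀ α, (∑ β, ∑ γ, Dz α (a γ) * (g γ β * ginv β α))
          = ∑ γ, Dz α (a γ) * (∑ β, g γ β * ginv β α) := by
        intro α
        rw [Finset.sum_comm]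
        exact Finset.sum_congr rfl fun γ _ => by rw [Finset.mul_sum]
      simp_rw [step2, hinv₁, mul_ite, mul_one, mul_zero]
      simp
    have hmid : (∑ γ, a γ * Dz γ d)
        = d * ∑ β, ∑ α, ginv β α * (∑ γ, a γ * Dz γ (g α β)) := by
      simp_rw [key, Finset.mul_sum]
      rw [Finset.sum_comm]
      refine Finset.sum_congr rfl fun β _ => ?_
      rw [Finset.sum_comm]
      refine Finset.sum_congr rfl fun α _ => ?_
      refine Finset.sum_congr rfl fun γ _ => by ring
    have hlast : d * (∑ γ, Dz γ (a γ))
        = d * ∑ β, ∑ α, ginv β α * (∑ γ, Dz α (a γ) * g γ β) := by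
      rw [htriple]
    rw [key Ds, hmid, hlast, ← mul_add, ← mul_add]
    simp_rw [← Finset.sum_add_distrib, ← mul_add, part1, mul_zero,
      Finset.sum_const_zero]
    exact mul_zero d
end

section
/- Let $f:\mathcal{X}\to S$ be a family with fiberwise Kähler form $\omega$, and let $A_s = A_{s\;\bar\beta}^{\;\alpha}\,\partial_\alpha \otimes dz^{\bar\beta} = \bar\partial(v)|_{\mathcal{X}_s}$ be the distinguished representative of the Kodaira-Spencer class, where $A_{s\;\bar\beta}^{\;\alpha} = a_{s\;;\bar\beta}^{\;\alpha}$. Then the lowered tensor $A_{s\bar\beta\bar\delta} = g_{\alpha\bar\delta} A_{s\;\bar\beta}^{\;\alpha}$ is symmetric: $A_{s\bar\beta\bar\delta} = A_{s\bar\delta\bar\beta}$, and moreover $A_{s\bar\beta\bar\delta;\bar\tau} = A_{s\bar\beta\bar\tau;\bar\delta}$ (symmetry of covariant derivatives in the last two barred indices). -/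
open scoped BigOperators

/-!
STATEMENT 6: Symmetry of the lowered Kodaira–Spencer tensor
`A_{sβ̄δ̄} = g_{αδ̄} A_s{}^α{}_{β̄}` (with `A_s{}^α{}_{β̄} = ∂_{β̄} a^α`) and
of its covariant derivatives: `A_{sβ̄δ̄} = A_{sδ̄β̄}` and
`A_{sβ̄δ̄;τ̄} = A_{sβ̄τ̄;δ̄}`.  Same coordinate model as before: `A` is the
function algebra, `Dz, Dzb, Ds, Dsb` commuting coordinate derivations,
`σc` complex conjugation, `g, ginv, gs, gsb, gss` the coefficients of the
`d`-closed form `ω` (closedness encoded componentwise), and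
`a^α = -g_{sβ̄} g^{β̄α}` the horizontal-lift coefficients.  The covariant
derivative uses the conjugate Christoffel symbols
`Γ̄^{σ̄}_{τ̄β̄} = conj(g^{δ̄σ} ∂_τ g_{βδ̄})` of the fiberwise Kähler metric.
-/
theorem stmt_6 (n : ℕ) (A : Type*) [CommRing A] [Algebra ℂ A]
    (Dz Dzb : Fin n → Derivation ℂ A A) (Ds Dsb : Derivation ℂ A A)
    (hcomm : ∀ D₁ D₂ : Derivation ℂ A A,
      D₁ ∈ insert Ds (insert Dsb (Set.range Dz ∪ Set.range Dzb)) →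
      D₂ ∈ insert Ds (insert Dsb (Set.range Dz ∪ Set.range Dzb)) →
      ∀ f, D₁ (D₂ f) = D₂ (D₁ f))
    (g ginv : Fin n → Fin n → A) (gs gsb : Fin n → A) (gss : A)
    (hinv₁ : ∀ α γ, (∑ β, g α β * ginv β γ) = if α = γ then 1 else 0)
    (hinv₂ : ∀ β δ, (∑ α, ginv β α * g α δ) = if β = δ then 1 else 0)
    (hc₁ : ∀ α β γ, Dz γ (g α β) = Dz α (g γ β))
    (hc₂ : ∀ α β, Ds (g α β) = Dz α (gs β))
    (hc₃ : ∀ α β δ, Dzb δ (g α β) = Dzb β (g α δ))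
    (hc₄ : ∀ α β, Dsb (g α β) = Dzb β (gsb α))
    (hc₅ : ∀ β δ, Dzb δ (gs β) = Dzb β (gs δ))
    (σc : A →+* A)
    (hσDz : ∀ α f, σc (Dz α f) = Dzb α (σc f))
    (hσg : ∀ α β, σc (g α β) = g β α)
    (hσginv : ∀ β α, σc (ginv β α) = ginv α β)
    (a : Fin n → A)
    (ha : ∀ α, a α = -∑ β, gs β * ginv β α)
    -- the lowered Kodaira-Spencer tensor A_{sβ̄δ̄}
    (Alow : Fin n → Fin n → A)
    (hAlow : ∀ β δ, Alow β δ = ∑ α, Dzb β (a α) * g α δ)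
    -- conjugate Christoffel symbols of the fiber metric
    (Γb : Fin n → Fin n → Fin n → A)
    (hΓb : ∀ s' t b, Γb s' t b = σc (∑ δ, ginv δ s' * Dz t (g b δ)))
    -- covariant derivative A_{sβ̄δ̄;τ̄}
    (AlowD : Fin n → Fin n → Fin n → A)
    (hAlowD : ∀ β δ τ, AlowD β δ τ =
      Dzb τ (Alow β δ) - (∑ s', Γb s' τ β * Alow s' δ) - ∑ s', Γb s' τ δ * Alow β s') :
    (∀ β δ, Alow β δ = Alow δ β) ∧ (∀ β δ τ, AlowD β δ τ = AlowD β τ δ) := by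
  classical
  -- Dzb derivations commute
  have hbb : ∀ α β f, Dzb α (Dzb β f) = Dzb β (Dzb α f) := by
    intro α β f
    exact hcomm (Dzb α) (Dzb β)
      (Set.mem_insert_of_mem _ (Set.mem_insert_of_mem _ (Or.inr ⟨α, rfl⟩)))
      (Set.mem_insert_of_mem _ (Set.mem_insert_of_mem _ (Or.inr ⟨β, rfl⟩))) f
  -- unconjugated formula for Γb
  have hΓ' : ∀ s' t b, Γb s' t b = ∑ ρ, ginv s' ρ * Dzb t (g ρ b) := by
    intro s' t b
    rw [hΓb, map_sum]
    refine Finset.sum_congr rfl fun ρ _ => ?_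
    rw [map_mul, hσginv, hσDz, hσg]
  -- symmetry of Γb in the last two indices
  have hΓsym : ∀ s' t b, Γb s' t b = Γb s' b t := by
    intro s' t b
    rw [hΓb, hΓb]
    congr 1
    exact Finset.sum_congr rfl fun δ _ => by rw [hc₁ b δ t]
  -- contraction identity
  have hcontr : ∀ α τ' β', (∑ s', g α s' * Γb s' τ' β') = Dzb τ' (g α β') := by
    intro α τ' β'
    calc ∑ s', g α s' * Γb s' τ' β'
        = ∑ s', ∑ ρ, g α s' * (ginv s' ρ * Dzb τ' (g ρ β')) := by
          refine Finset.sum_congr rfl fun s' _ => ?_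
          rw [hΓ' s' τ' β', Finset.mul_sum]
      _ = ∑ ρ, (∑ s', g α s' * ginv s' ρ) * Dzb τ' (g ρ β') := by
          rw [Finset.sum_comm]
          refine Finset.sum_congr rfl fun ρ _ => ?_
          rw [Finset.sum_mul]
          exact Finset.sum_congr rfl fun s' _ => by ring
      _ = Dzb τ' (g α β') := by
          simp only [hinv₁, ite_mul, one_mul, zero_mul]
          simp [Finset.sum_ite_eq]
  -- key contraction: ∑ a α g α δ = -gs δ
  have hkey : ∀ δ, (∑ α, a α * g α δ) = -gs δ := by
    intro δ
    calc ∑ α, a α * g α δ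
        = ∑ α, ∑ β', -(gs β' * (ginv β' α * g α δ)) := by
          refine Finset.sum_congr rfl fun α _ => ?_
          rw [ha α, neg_mul, Finset.sum_mul, ← Finset.sum_neg_distrib]
          exact Finset.sum_congr rfl fun β' _ => by ring
      _ = ∑ β', ∑ α, -(gs β' * (ginv β' α * g α δ)) := Finset.sum_comm
      _ = ∑ β', -(gs β' * ∑ α, ginv β' α * g α δ) := by
          refine Finset.sum_congr rfl fun β' _ => ?_
          rw [Finset.sum_neg_distrib, ← Finset.mul_sum]
      _ = -gs δ := by
          simp [hinv₂, Finset.sum_ite_eq', mul_ite]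
  -- the P-formula for Alow
  have hP : ∀ β δ, Alow β δ = -Dzb β (gs δ) - ∑ α, a α * Dzb β (g α δ) := by
    intro β δ
    have h := congrArg (Dzb β) (hkey δ)
    rw [map_sum, map_neg] at h
    simp only [Derivation.leibniz, smul_eq_mul] at h
    rw [Finset.sum_add_distrib] at h
    rw [hAlow]
    have hc : (∑ α, Dzb β (a α) * g α δ) = ∑ α, g α δ * Dzb β (a α) :=
      Finset.sum_congr rfl fun α _ => mul_comm _ _
    rw [hc]
    linear_combination h
  -- part 1: symmetry of Alow
  have hsym : ∀ β δ, Alow β δ = Alow δ β := by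
    intro β δ
    rw [hP β δ, hP δ β, ← hc₅ β δ]
    congr 1
    refine Finset.sum_congr rfl fun α _ => ?_
    rw [hc₃ α δ β]
  refine ⟨hsym, ?_⟩
  intro β δ τ
  -- expansion of the derivative of Alow
  have hD : ∀ δ' τ', Dzb τ' (Alow β δ') =
      -Dzb τ' (Dzb β (gs δ')) -
        ∑ α, (Dzb τ' (a α) * Dzb β (g α δ') + a α * Dzb τ' (Dzb β (g α δ'))) := by
    intro δ' τ'
    rw [hP, map_sub, map_neg, map_sum]
    congr 1
    refine Finset.sum_congr rfl fun α _ => ?_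
    rw [Derivation.leibniz, smul_eq_mul, smul_eq_mul]
    ring
  -- the Christoffel-contracted term
  have h2 : ∀ δ' τ', (∑ s', Γb s' τ' β * Alow s' δ') =
      ∑ α, Dzb δ' (a α) * Dzb τ' (g α β) := by
    intro δ' τ'
    calc ∑ s', Γb s' τ' β * Alow s' δ'
        = ∑ s', ∑ α, Γb s' τ' β * (Dzb δ' (a α) * g α s') := by
          refine Finset.sum_congr rfl fun s' _ => ?_
          rw [hsym s' δ', hAlow, Finset.mul_sum]
      _ = ∑ α, Dzb δ' (a α) * ∑ s', g α s' * Γb s' τ' β := by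
          rw [Finset.sum_comm]
          refine Finset.sum_congr rfl fun α _ => ?_
          rw [Finset.mul_sum]
          exact Finset.sum_congr rfl fun s' _ => by ring
      _ = ∑ α, Dzb δ' (a α) * Dzb τ' (g α β) := by
          refine Finset.sum_congr rfl fun α _ => ?_
          rw [hcontr]
  have h3 : (∑ s', Γb s' τ δ * Alow β s') = ∑ s', Γb s' δ τ * Alow β s' :=
    Finset.sum_congr rfl fun s' _ => by rw [hΓsym]
  have e1 : Dzb τ (Dzb β (gs δ)) = Dzb δ (Dzb β (gs τ)) := by
    rw [← hc₅ β δ, hbb τ δ, ← hc₅ τ β]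
  have sumEq :
      (∑ α, (Dzb τ (a α) * Dzb β (g α δ) + a α * Dzb τ (Dzb β (g α δ)))) +
        ∑ α, Dzb δ (a α) * Dzb τ (g α β) =
      (∑ α, (Dzb δ (a α) * Dzb β (g α τ) + a α * Dzb δ (Dzb β (g α τ)))) +
        ∑ α, Dzb τ (a α) * Dzb δ (g α β) := by
    rw [← Finset.sum_add_distrib, ← Finset.sum_add_distrib]
    refine Finset.sum_congr rfl fun α _ => ?_
    rw [hc₃ α δ β, hc₃ α τ β, hbb δ τ (g α β)]
    ring
  rw [hAlowD β δ τ, hAlowD β τ δ, hD δ τ, hD τ δ, h2 δ τ, h2 τ δ, h3]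
  linear_combination -e1 - sumEq
end

section
/- Let $\eta_s = -(v \cup \Theta)|_{\mathcal{X}_s} = -(\Theta_{s\bar\beta} + a_s^\alpha \Theta_{\alpha\bar\beta})\,dz^{\bar\beta}$ be the $End(\mathcal{E})$-valued $(0,1)$-form on a fiber $X = \mathcal{X}_s$ obtained by contracting the curvature $\Theta$ of a hermitian vector bundle $(\mathcal{E},h)$ with the horizontal lift $v$. If $A_s \cup \Theta = 0$, i.e. $A_{s\;\bar\delta}^{\;\alpha}\Theta_{\alpha\bar\beta} = A_{s\;\bar\beta}^{\;\alpha}\Theta_{\alpha\bar\delta}$, then $\eta_s$ is $\bar\partial$-closed on $X$. -/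
open scoped BigOperators

theorem stmt_8 (n r : ℕ) (A : Type*) [CommRing A] [Algebra ℂ A]
    (Dz Dzb : Fin n → Derivation ℂ A A) (Ds : Derivation ℂ A A)
    (hcomm : ∀ β δ f, Dzb β (Dzb δ f) = Dzb δ (Dzb β f))
    (a : Fin n → A)
    (θs : Matrix (Fin r) (Fin r) A) (θz : Fin n → Matrix (Fin r) (Fin r) A)
    (Θs : Fin n → Matrix (Fin r) (Fin r) A)
    (ΘB : Fin n → Fin n → Matrix (Fin r) (Fin r) A)
    (hΘs : ∀ β, Θs β = θs.map (fun x => Dzb β x))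
    (hΘB : ∀ α β, ΘB α β = (θz α).map (fun x => Dzb β x))
    (η : Fin n → Matrix (Fin r) (Fin r) A)
    (hη : ∀ β, η β = -(Θs β + ∑ α, a α • ΘB α β))
    (hcup : ∀ β δ, (∑ α, (Dzb β (a α)) • ΘB α δ) = ∑ α, (Dzb δ (a α)) • ΘB α β) :
    ∀ β δ, (η β).map (fun x => Dzb δ x) = (η δ).map (fun x => Dzb β x) := by
  intro β δ
  ext i j
  have h1 : (∑ α, (Dzb δ (a α)) • ΘB α β) i j = (∑ α, (Dzb β (a α)) • ΘB α δ) i j := by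
    rw [hcup]
  simp only [hη, hΘs, hΘB, Matrix.map_apply, Matrix.neg_apply, Matrix.add_apply,
    Matrix.sum_apply, Matrix.smul_apply, smul_eq_mul, map_neg, map_add, map_sum,
    Derivation.leibniz] at *
  rw [hcomm δ β (θs i j)]
  congr 1
  congr 1
  rw [Finset.sum_add_distrib, Finset.sum_add_distrib]
  congr 1
  · exact Finset.sum_congr rfl fun γ _ => by rw [hcomm δ β]
  · calc ∑ x, Dzb β (θz x i j) * Dzb δ (a x)
        = ∑ x, Dzb δ (a x) * Dzb β (θz x i j) := by simp [mul_comm]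
      _ = ∑ x, Dzb β (a x) * Dzb δ (θz x i j) := h1
      _ = ∑ x, Dzb δ (θz x i j) * Dzb β (a x) := by simp [mul_comm]
end

section
/- With notation as above, if the restriction of $h$ to the fiber $X = \mathcal{X}_s$ is a Hermite-Einstein metric on $E = \mathcal{E}|_X$ with respect to $\omega|_X$ (i.e. the mean curvature $g^{\bar\beta\alpha}\Theta_{\alpha\bar\beta}$ is a constant multiple of the identity endomorphism), then the $End(E)$-valued $(0,1)$-form $\eta_s = -(v\cup\Theta)|_X$ is $\bar\partial^*$-closed on $X$. -/
open scoped BigOperators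

section Aux
variable {A : Type*} [CommRing A] [Algebra ℂ A] {m : ℕ}

lemma mapD_sum {ι : Type*} (D : Derivation ℂ A A) (s : Finset ι)
    (M : ι → Matrix (Fin m) (Fin m) A) :
    (∑ i ∈ s, M i).map (fun x => D x) = ∑ i ∈ s, (M i).map (fun x => D x) := by
  ext i j
  simp [Matrix.map_apply, Matrix.sum_apply]

lemma mapD_add (D : Derivation ℂ A A) (M N : Matrix (Fin m) (Fin m) A) :
    (M + N).map (fun x => D x) = M.map (fun x => D x) + N.map (fun x => D x) := by
  ext i j; simp [Matrix.map_apply]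

lemma mapD_neg (D : Derivation ℂ A A) (M : Matrix (Fin m) (Fin m) A) :
    (-M).map (fun x => D x) = -(M.map (fun x => D x)) := by
  ext i j; simp [Matrix.map_apply]

lemma mapD_sub (D : Derivation ℂ A A) (M N : Matrix (Fin m) (Fin m) A) :
    (M - N).map (fun x => D x) = M.map (fun x => D x) - N.map (fun x => D x) := by
  ext i j; simp [Matrix.map_apply]

lemma mapD_smulA (D : Derivation ℂ A A) (a : A) (M : Matrix (Fin m) (Fin m) A) :
    (a • M).map (fun x => D x) = D a • M + a • M.map (fun x => D x) := by
  ext i j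
  simp only [Matrix.map_apply, Matrix.add_apply, Matrix.smul_apply, smul_eq_mul,
    Derivation.leibniz]
  ring

lemma mapD_smulC (D : Derivation ℂ A A) (c : ℂ) (M : Matrix (Fin m) (Fin m) A) :
    (c • M).map (fun x => D x) = c • M.map (fun x => D x) := by
  ext i j; simp [Matrix.map_apply]

lemma mapD_one (D : Derivation ℂ A A) :
    (1 : Matrix (Fin m) (Fin m) A).map (fun x => D x) = 0 := by
  ext i j
  by_cases h : i = j <;> simp [Matrix.map_apply, Matrix.one_apply, h]

lemma mapD_mul (D : Derivation ℂ A A) (M N : Matrix (Fin m) (Fin m) A) :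
    (M * N).map (fun x => D x)
      = M.map (fun x => D x) * N + M * N.map (fun x => D x) := by
  ext i j
  simp only [Matrix.map_apply, Matrix.mul_apply, Matrix.add_apply, map_sum,
    Derivation.leibniz, smul_eq_mul]
  rw [← Finset.sum_add_distrib]
  congr 1; ext k; ring

lemma mapD_inv (D : Derivation ℂ A A) (M N : Matrix (Fin m) (Fin m) A)
    (h₁ : M * N = 1) (h₂ : N * M = 1) :
    N.map (fun x => D x) = -(N * M.map (fun x => D x) * N) := by
  have h := congrArg (fun X => X.map (fun x => D x)) h₁
  simp only [mapD_mul, mapD_one] at h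
  have h' : M * N.map (fun x => D x) = -(M.map (fun x => D x) * N) := by
    linear_combination (norm := abel) h
  calc N.map (fun x => D x) = (N * M) * N.map (fun x => D x) := by rw [h₂, one_mul]
    _ = N * (M * N.map (fun x => D x)) := by rw [mul_assoc]
    _ = -(N * M.map (fun x => D x) * N) := by rw [h']; noncomm_ring

lemma bianchi (D₁ D₂ E : Derivation ℂ A A)
    (h12 : ∀ x, D₂ (D₁ x) = D₁ (D₂ x))
    (h1E : ∀ x, E (D₁ x) = D₁ (E x))
    (h2E : ∀ x, E (D₂ x) = D₂ (E x))
    (H K : Matrix (Fin m) (Fin m) A) (hHK : H * K = 1) (hKH : K * H = 1) :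
    ((H.map (fun x => D₁ x) * K).map (fun x => E x)).map (fun x => D₂ x)
      - (H.map (fun x => D₂ x) * K * ((H.map (fun x => D₁ x) * K).map (fun x => E x))
         - ((H.map (fun x => D₁ x) * K).map (fun x => E x)) * (H.map (fun x => D₂ x) * K))
    = ((H.map (fun x => D₂ x) * K).map (fun x => E x)).map (fun x => D₁ x)
      - (H.map (fun x => D₁ x) * K * ((H.map (fun x => D₂ x) * K).map (fun x => E x))
         - ((H.map (fun x => D₂ x) * K).map (fun x => E x)) * (H.map (fun x => D₁ x) * K)) := by
  have hK1 := mapD_inv D₁ H K hHK hKH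
  have hK2 := mapD_inv D₂ H K hHK hKH
  have hKE := mapD_inv E H K hHK hKH
  simp only [mapD_mul, mapD_sub, mapD_neg, mapD_add, Matrix.map_map, hK1, hK2, hKE,
    Function.comp_def]
  have c12 : H.map (fun x => D₂ (D₁ x)) = H.map (fun x => D₁ (D₂ x)) :=
    congrArg _ (funext h12)
  have c1E : H.map (fun x => D₂ (E (D₁ x))) = H.map (fun x => D₂ (D₁ (E x))) :=
    congrArg _ (funext fun x => congrArg _ (h1E x))
  have c2E : H.map (fun x => D₁ (E (D₂ x))) = H.map (fun x => D₁ (D₂ (E x))) :=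
    congrArg _ (funext fun x => congrArg _ (h2E x))
  have ctrip : H.map (fun x => D₂ (D₁ (E x))) = H.map (fun x => D₁ (D₂ (E x))) :=
    congrArg _ (funext fun x => h12 (E x))
  have d1 : H.map (fun x => E (D₁ x)) = H.map (fun x => D₁ (E x)) :=
    congrArg _ (funext h1E)
  have d2 : H.map (fun x => E (D₂ x)) = H.map (fun x => D₂ (E x)) :=
    congrArg _ (funext h2E)
  rw [c12, c1E, c2E, ctrip, d1, d2]
  noncomm_ring

end Aux

/-!
STATEMENT 9: If `h|_E` is Hermite–Einstein on the fiber `X = 𝒳_s`, then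
`η_s = -(v ∪ Θ)|_X` is `∂̄^*`-closed on `X`.
-/
theorem stmt_9 (n r : ℕ) (A : Type*) [CommRing A] [Algebra ℂ A]
    (Dz Dzb : Fin n → Derivation ℂ A A) (Ds : Derivation ℂ A A)
    (hcomm₁ : ∀ α β f, Dz α (Dz β f) = Dz β (Dz α f))
    (hcomm₂ : ∀ α β f, Dz α (Dzb β f) = Dzb β (Dz α f))
    (hcomm₃ : ∀ α f, Ds (Dz α f) = Dz α (Ds f))
    (hcomm₄ : ∀ β f, Ds (Dzb β f) = Dzb β (Ds f))
    (g ginv : Fin n → Fin n → A) (gs : Fin n → A)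
    (hinv₁ : ∀ α γ, (∑ β, g α β * ginv β γ) = if α = γ then 1 else 0)
    (hinv₂ : ∀ β δ, (∑ α, ginv β α * g α δ) = if β = δ then 1 else 0)
    (hKae : ∀ α β γ, Dz γ (g α β) = Dz α (g γ β))
    (hclose : ∀ α β, Ds (g α β) = Dz α (gs β))
    (a : Fin n → A)
    (ha : ∀ α, a α = -∑ β, gs β * ginv β α)
    -- hermitian metric of ℰ and its Chern connection/curvature
    (hm hmInv : Matrix (Fin r) (Fin r) A)
    (hhm₁ : hm * hmInv = 1) (hhm₂ : hmInv * hm = 1)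
    (θs : Matrix (Fin r) (Fin r) A) (θz : Fin n → Matrix (Fin r) (Fin r) A)
    (hθs : θs = (hm.map (fun x => Ds x)) * hmInv)
    (hθz : ∀ α, θz α = (hm.map (fun x => Dz α x)) * hmInv)
    (Θs : Fin n → Matrix (Fin r) (Fin r) A)
    (ΘB : Fin n → Fin n → Matrix (Fin r) (Fin r) A)
    (hΘs : ∀ β, Θs β = θs.map (fun x => Dzb β x))
    (hΘB : ∀ α β, ΘB α β = (θz α).map (fun x => Dzb β x))
    -- Hermite-Einstein condition on the fiber
    (cHE : ℂ)
    (hHE : (∑ β, ∑ α, ginv β α • ΘB α β) = cHE • (1 : Matrix (Fin r) (Fin r) A))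
    (η : Fin n → Matrix (Fin r) (Fin r) A)
    (hη : ∀ β, η β = -(Θs β + ∑ α, a α • ΘB α β)) :
    (∑ β, ∑ γ, ginv β γ •
        ((η β).map (fun x => Dz γ x) - (θz γ * η β - η β * θz γ))) = 0 := by
  classical
  -- Bianchi identities
  have bianchi1 : ∀ α γ β,
      (ΘB α β).map (fun x => Dz γ x) - (θz γ * ΘB α β - ΘB α β * θz γ)
        = (ΘB γ β).map (fun x => Dz α x) - (θz α * ΘB γ β - ΘB γ β * θz α) := by
    intro α γ β
    rw [hΘB, hΘB, hθz, hθz]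
    exact bianchi (Dz α) (Dz γ) (Dzb β)
      (fun x => hcomm₁ γ α x) (fun x => (hcomm₂ α β x).symm) (fun x => (hcomm₂ γ β x).symm)
      hm hmInv hhm₁ hhm₂
  have bianchi2 : ∀ γ β,
      (Θs β).map (fun x => Dz γ x) - (θz γ * Θs β - Θs β * θz γ)
        = (ΘB γ β).map (fun x => Ds x) - (θs * ΘB γ β - ΘB γ β * θs) := by
    intro γ β
    rw [hΘs, hΘB, hθs, hθz]
    exact bianchi Ds (Dz γ) (Dzb β)
      (fun x => (hcomm₃ γ x).symm) (fun x => (hcomm₄ β x).symm)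
      (fun x => (hcomm₂ γ β x).symm) hm hmInv hhm₁ hhm₂
  -- pointwise expansion of the integrand
  have step1 : ∀ β γ, (η β).map (fun x => Dz γ x) - (θz γ * η β - η β * θz γ)
      = -( ((Θs β).map (fun x => Dz γ x) - (θz γ * Θs β - Θs β * θz γ))
         + (∑ α, (Dz γ (a α)) • ΘB α β)
         + (∑ α, a α • ((ΘB α β).map (fun x => Dz γ x)
              - (θz γ * ΘB α β - ΘB α β * θz γ)))) := by
    intro β γ
    rw [hη β]
    simp only [mapD_neg, mapD_add, mapD_sum, mapD_smulA, smul_sub, mul_neg, neg_mul,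
      mul_add, add_mul, Finset.mul_sum, Finset.sum_mul, mul_smul_comm, smul_mul_assoc,
      Finset.sum_add_distrib, Finset.sum_sub_distrib]
    abel
  have hpoint : ∀ β γ, ginv β γ •
      ((η β).map (fun x => Dz γ x) - (θz γ * η β - η β * θz γ))
      = -( (ginv β γ • ((ΘB γ β).map (fun x => Ds x))
            - ginv β γ • (θs * ΘB γ β - ΘB γ β * θs))
         + (∑ α, (ginv β γ * Dz γ (a α)) • ΘB α β)
         + ((∑ α, (ginv β γ * a α) • ((ΘB γ β).map (fun x => Dz α x)))
            - (∑ α, (ginv β γ * a α) • (θz α * ΘB γ β - ΘB γ β * θz α)))) := by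
    intro β γ
    rw [step1 β γ, bianchi2 γ β,
      Finset.sum_congr rfl (fun α _ => by rw [bianchi1 α γ β] :
        ∀ α ∈ Finset.univ, a α • ((ΘB α β).map (fun x => Dz γ x)
            - (θz γ * ΘB α β - ΘB α β * θz γ))
          = a α • ((ΘB γ β).map (fun x => Dz α x)
            - (θz α * ΘB γ β - ΘB γ β * θz α)))]
    simp only [smul_neg, smul_add, smul_sub, Finset.smul_sum, smul_smul,
      Finset.sum_sub_distrib]
  -- differentiated Hermite-Einstein condition
  have hDHE : ∀ (D : Derivation ℂ A A),
      (∑ β, ∑ γ, ginv β γ • ((ΘB γ β).map (fun x => D x)))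
        = -∑ β, ∑ γ, D (ginv β γ) • ΘB γ β := by
    intro D
    have h := congrArg (fun X : Matrix (Fin r) (Fin r) A => X.map (fun x => D x)) hHE
    simp only [mapD_sum, mapD_smulA, mapD_smulC, mapD_one, smul_zero,
      Finset.sum_add_distrib] at h
    linear_combination (norm := abel) h
  -- rewrite the goal
  rw [Finset.sum_congr rfl (fun β _ => Finset.sum_congr rfl (fun γ (_ : γ ∈ Finset.univ) => hpoint β γ))]
  simp only [Finset.sum_neg_distrib, neg_eq_zero, Finset.sum_add_distrib,
    Finset.sum_sub_distrib]
  -- reordering helpers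
  have reorder3 : ∀ (F : Fin n → Fin n → Fin n → Matrix (Fin r) (Fin r) A),
      (∑ β : Fin n, ∑ γ : Fin n, ∑ α : Fin n, F β γ α)
        = ∑ α : Fin n, ∑ β : Fin n, ∑ γ : Fin n, F β γ α := by
    intro F
    calc (∑ β : Fin n, ∑ γ : Fin n, ∑ α : Fin n, F β γ α)
        = ∑ β : Fin n, ∑ α : Fin n, ∑ γ : Fin n, F β γ α :=
          Finset.sum_congr rfl fun β _ => by rw [Finset.sum_comm]
      _ = ∑ α : Fin n, ∑ β : Fin n, ∑ γ : Fin n, F β γ α := by rw [Finset.sum_comm]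
  have swap13 : ∀ (F : Fin n → Fin n → Fin n → Fin n → A),
      (∑ d : Fin n, ∑ c : Fin n, ∑ b : Fin n, ∑ e : Fin n, F d c b e)
        = ∑ b : Fin n, ∑ c : Fin n, ∑ d : Fin n, ∑ e : Fin n, F d c b e := by
    intro F
    calc (∑ d : Fin n, ∑ c : Fin n, ∑ b : Fin n, ∑ e : Fin n, F d c b e)
        = ∑ d : Fin n, ∑ b : Fin n, ∑ c : Fin n, ∑ e : Fin n, F d c b e :=
          Finset.sum_congr rfl fun d _ => by rw [Finset.sum_comm]
      _ = ∑ b : Fin n, ∑ d : Fin n, ∑ c : Fin n, ∑ e : Fin n, F d c b e := by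
          rw [Finset.sum_comm]
      _ = ∑ b : Fin n, ∑ c : Fin n, ∑ d : Fin n, ∑ e : Fin n, F d c b e :=
          Finset.sum_congr rfl fun b _ => by rw [Finset.sum_comm]
  -- derivative of the inverse metric
  have dginv : ∀ (D : Derivation ℂ A A) (β μ : Fin n),
      D (ginv β μ) = -∑ ρ : Fin n, ∑ ν : Fin n, ginv β ρ * D (g ρ ν) * ginv ν μ := by
    intro D β μ
    have hG1 : (Matrix.of g) * (Matrix.of ginv) = (1 : Matrix (Fin n) (Fin n) A) := by
      ext α γ
      simp [Matrix.mul_apply, Matrix.one_apply, hinv₁]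
    have hG2 : (Matrix.of ginv) * (Matrix.of g) = (1 : Matrix (Fin n) (Fin n) A) := by
      ext β' δ
      simp [Matrix.mul_apply, Matrix.one_apply, hinv₂]
    have h := congrArg (fun M : Matrix (Fin n) (Fin n) A => M β μ)
      (mapD_inv D (Matrix.of g) (Matrix.of ginv) hG1 hG2)
    simp only [Matrix.map_apply, Matrix.of_apply, Matrix.neg_apply, Matrix.mul_apply,
      Finset.sum_mul] at h
    rw [h]
    rw [Finset.sum_comm]
  -- the scalar identity coming from Kählerness of ω and dω = 0
  have hscal : ∀ β μ : Fin n,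
      -(Ds (ginv β μ)) + (∑ δ : Fin n, ginv β δ * Dz δ (a μ))
        + (∑ α : Fin n, -(a α * Dz α (ginv β μ))) = 0 := by
    intro β μ
    have e1 : Ds (ginv β μ)
        = -∑ ρ : Fin n, ∑ ν : Fin n, ginv β ρ * Dz ρ (gs ν) * ginv ν μ := by
      rw [dginv Ds β μ]
      congr 1
      exact Finset.sum_congr rfl fun ρ _ => Finset.sum_congr rfl fun ν _ => by
        rw [hclose ρ ν]
    have e2 : ∀ δ, Dz δ (ginv β μ)
        = -∑ ρ : Fin n, ∑ ν : Fin n, ginv β ρ * Dz ρ (g δ ν) * ginv ν μ := by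
      intro δ
      rw [dginv (Dz δ) β μ]
      congr 1
      exact Finset.sum_congr rfl fun ρ _ => Finset.sum_congr rfl fun ν _ => by
        rw [hKae ρ ν δ]
    have e3 : ∀ γ ν, Dz γ (ginv ν μ)
        = -∑ ρ : Fin n, ∑ σ : Fin n, ginv ν ρ * Dz ρ (g γ σ) * ginv σ μ := by
      intro γ ν
      rw [dginv (Dz γ) ν μ]
      congr 1
      exact Finset.sum_congr rfl fun ρ _ => Finset.sum_congr rfl fun σ _ => by
        rw [hKae ρ σ γ]
    have e4 : ∀ γ, Dz γ (a μ)
        = -(∑ ν : Fin n, Dz γ (gs ν) * ginv ν μ)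
          + ∑ ν : Fin n, ∑ ρ : Fin n, ∑ σ : Fin n,
              gs ν * (ginv ν ρ * Dz ρ (g γ σ) * ginv σ μ) := by
      intro γ
      rw [ha μ, map_neg, map_sum]
      have h' : (∑ ν : Fin n, Dz γ (gs ν * ginv ν μ))
          = ∑ ν : Fin n, (Dz γ (gs ν) * ginv ν μ
              + gs ν * -(∑ ρ : Fin n, ∑ σ : Fin n, ginv ν ρ * Dz ρ (g γ σ) * ginv σ μ)) :=
        Finset.sum_congr rfl fun ν _ => by
          rw [Derivation.leibniz, smul_eq_mul, smul_eq_mul, e3 γ ν]; ring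
      rw [h']
      simp only [mul_neg, Finset.mul_sum, Finset.sum_add_distrib, Finset.sum_neg_distrib,
        neg_add, neg_neg]
    -- expand the middle sum
    have hB : (∑ δ : Fin n, ginv β δ * Dz δ (a μ))
        = -(∑ ρ : Fin n, ∑ ν : Fin n, ginv β ρ * Dz ρ (gs ν) * ginv ν μ)
          + ∑ δ : Fin n, ∑ ν : Fin n, ∑ ρ : Fin n, ∑ σ : Fin n,
              ginv β δ * (gs ν * (ginv ν ρ * Dz ρ (g δ σ) * ginv σ μ)) := by
      have h' : (∑ δ : Fin n, ginv β δ * Dz δ (a μ))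
          = ∑ δ : Fin n, ginv β δ * (-(∑ ν : Fin n, Dz δ (gs ν) * ginv ν μ)
              + ∑ ν : Fin n, ∑ ρ : Fin n, ∑ σ : Fin n,
                  gs ν * (ginv ν ρ * Dz ρ (g δ σ) * ginv σ μ)) :=
        Finset.sum_congr rfl fun δ _ => by rw [e4 δ]
      rw [h']
      simp only [mul_add, mul_neg, Finset.mul_sum, Finset.sum_add_distrib,
        Finset.sum_neg_distrib, neg_add]
      congr 1
      · congr 1
        exact Finset.sum_congr rfl fun ρ _ => Finset.sum_congr rfl fun ν _ => by ring
    have hD : (∑ α : Fin n, -(a α * Dz α (ginv β μ)))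
        = -(∑ δ : Fin n, ∑ ν : Fin n, ∑ ρ : Fin n, ∑ σ : Fin n,
              ginv β δ * (gs ν * (ginv ν ρ * Dz ρ (g δ σ) * ginv σ μ))) := by
      have h' : (∑ α : Fin n, -(a α * Dz α (ginv β μ)))
          = ∑ α : Fin n, -(∑ σ : Fin n, gs σ * ginv σ α *
              ∑ ρ : Fin n, ∑ ν : Fin n, ginv β ρ * Dz ρ (g α ν) * ginv ν μ) :=
        Finset.sum_congr rfl fun α _ => by
          rw [e2 α, ha α, neg_mul_neg, Finset.sum_mul]
      rw [h']
      rw [Finset.sum_neg_distrib]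
      congr 1
      -- flatten and reorder
      calc (∑ α : Fin n, ∑ σ : Fin n, gs σ * ginv σ α *
              ∑ ρ : Fin n, ∑ ν : Fin n, ginv β ρ * Dz ρ (g α ν) * ginv ν μ)
          = ∑ α : Fin n, ∑ σ : Fin n, ∑ ρ : Fin n, ∑ ν : Fin n,
              gs σ * ginv σ α * (ginv β ρ * (Dz α (g ρ ν)) * ginv ν μ) := by
            refine Finset.sum_congr rfl fun α _ => Finset.sum_congr rfl fun σ _ => ?_
            rw [Finset.mul_sum]
            refine Finset.sum_congr rfl fun ρ _ => ?_
            rw [Finset.mul_sum]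
            refine Finset.sum_congr rfl fun ν _ => ?_
            rw [hKae α ν ρ]
        _ = ∑ ρ : Fin n, ∑ σ : Fin n, ∑ α : Fin n, ∑ ν : Fin n,
              gs σ * ginv σ α * (ginv β ρ * (Dz α (g ρ ν)) * ginv ν μ) := by
            rw [swap13]
        _ = ∑ δ : Fin n, ∑ ν : Fin n, ∑ ρ : Fin n, ∑ σ : Fin n,
              ginv β δ * (gs ν * (ginv ν ρ * Dz ρ (g δ σ) * ginv σ μ)) := by
            refine Finset.sum_congr rfl fun δ _ => Finset.sum_congr rfl fun ν _ =>
              Finset.sum_congr rfl fun ρ _ => Finset.sum_congr rfl fun σ _ => by ring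
    rw [e1, hB, hD]
    abel
  -- the two commutator sums vanish by the Hermite-Einstein condition
  have hU2 : (∑ β : Fin n, ∑ γ : Fin n, ginv β γ • (θs * ΘB γ β - ΘB γ β * θs)) = 0 := by
    have e : (∑ β : Fin n, ∑ γ : Fin n, ginv β γ • (θs * ΘB γ β - ΘB γ β * θs))
        = θs * (∑ β : Fin n, ∑ γ : Fin n, ginv β γ • ΘB γ β)
          - (∑ β : Fin n, ∑ γ : Fin n, ginv β γ • ΘB γ β) * θs := by
      simp only [smul_sub, Finset.sum_sub_distrib, Finset.mul_sum, Finset.sum_mul,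
        mul_smul_comm, smul_mul_assoc]
    rw [e, hHE]
    simp [mul_smul_comm, smul_mul_assoc]
  have hU5 : (∑ β : Fin n, ∑ γ : Fin n, ∑ α : Fin n,
      (ginv β γ * a α) • (θz α * ΘB γ β - ΘB γ β * θz α)) = 0 := by
    rw [reorder3]
    refine Finset.sum_eq_zero fun α _ => ?_
    have e : (∑ β : Fin n, ∑ γ : Fin n, (ginv β γ * a α) • (θz α * ΘB γ β - ΘB γ β * θz α))
        = a α • (θz α * (∑ β : Fin n, ∑ γ : Fin n, ginv β γ • ΘB γ β)
          - (∑ β : Fin n, ∑ γ : Fin n, ginv β γ • ΘB γ β) * θz α) := by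
      simp only [smul_sub, Finset.smul_sum, Finset.sum_sub_distrib, Finset.mul_sum,
        Finset.sum_mul, mul_smul_comm, smul_mul_assoc, smul_smul, mul_comm]
    rw [e, hHE]
    simp [mul_smul_comm, smul_mul_assoc]
  -- canonical forms of the remaining three sums
  have hU1' : (∑ β : Fin n, ∑ γ : Fin n, ginv β γ • ((ΘB γ β).map fun x => Ds x))
      = ∑ β : Fin n, ∑ μ : Fin n, (-(Ds (ginv β μ))) • ΘB μ β := by
    rw [hDHE Ds]
    simp only [← Finset.sum_neg_distrib, ← neg_smul]
  have hU3' : (∑ β : Fin n, ∑ γ : Fin n, ∑ α : Fin n,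
      (ginv β γ * Dz γ (a α)) • ΘB α β)
      = ∑ β : Fin n, ∑ μ : Fin n, (∑ δ : Fin n, ginv β δ * Dz δ (a μ)) • ΘB μ β := by
    refine Finset.sum_congr rfl fun β _ => ?_
    rw [Finset.sum_comm]
    exact Finset.sum_congr rfl fun μ _ => (Finset.sum_smul).symm
  have hU4' : (∑ β : Fin n, ∑ γ : Fin n, ∑ α : Fin n,
      (ginv β γ * a α) • ((ΘB γ β).map fun x => Dz α x))
      = ∑ β : Fin n, ∑ μ : Fin n, (∑ α : Fin n, -(a α * Dz α (ginv β μ))) • ΘB μ β := by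
    calc (∑ β : Fin n, ∑ γ : Fin n, ∑ α : Fin n,
        (ginv β γ * a α) • ((ΘB γ β).map fun x => Dz α x))
        = ∑ α : Fin n, ∑ β : Fin n, ∑ γ : Fin n,
            (ginv β γ * a α) • ((ΘB γ β).map fun x => Dz α x) := reorder3 _
      _ = ∑ α : Fin n, a α • (∑ β : Fin n, ∑ γ : Fin n,
            ginv β γ • ((ΘB γ β).map fun x => Dz α x)) := by
          refine Finset.sum_congr rfl fun α _ => ?_
          simp only [Finset.smul_sum, smul_smul]
          exact Finset.sum_congr rfl fun β _ => Finset.sum_congr rfl fun γ _ => by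
            rw [mul_comm]
      _ = ∑ α : Fin n, a α • (-∑ β : Fin n, ∑ γ : Fin n, Dz α (ginv β γ) • ΘB γ β) := by
          exact Finset.sum_congr rfl fun α _ => by rw [hDHE (Dz α)]
      _ = ∑ α : Fin n, ∑ β : Fin n, ∑ γ : Fin n, (-(a α * Dz α (ginv β γ))) • ΘB γ β := by
          refine Finset.sum_congr rfl fun α _ => ?_
          simp only [smul_neg, Finset.smul_sum, smul_smul, mul_neg,
            ← Finset.sum_neg_distrib, ← neg_smul]
      _ = ∑ β : Fin n, ∑ γ : Fin n, ∑ α : Fin n, (-(a α * Dz α (ginv β γ))) • ΘB γ β :=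
          (reorder3 _).symm
      _ = ∑ β : Fin n, ∑ μ : Fin n, (∑ α : Fin n, -(a α * Dz α (ginv β μ))) • ΘB μ β :=
          Finset.sum_congr rfl fun β _ => Finset.sum_congr rfl fun μ _ =>
            (Finset.sum_smul).symm
  rw [hU2, hU5, hU1', hU3', hU4']
  simp only [sub_zero]
  simp only [← Finset.sum_add_distrib]
  refine Finset.sum_eq_zero fun β _ => Finset.sum_eq_zero fun μ _ => ?_
  rw [← add_smul, ← add_smul, hscal β μ, zero_smul]
end

section
/- Let $\mathcal{E} \to X \times S$ be a family of hermitian holomorphic vector bundles over a fixed compact Kähler manifold $(X,\omega)$, with harmonic Kodaira–Spencer representatives $\eta_s = -\Theta_{s\bar\beta}dz^{\bar\beta} \in \mathcal{A}^{0,1}(X, End(E_s))$. Suppose the restriction of $\mathcal{E}$ to each fiber $X\times\{s\}$ is hermitian flat and the forms $\eta_i$ are fiberwise parallel. Then for all base directions $i, k$, the $End(E_s)$-valued $(0,2)$-forms $\tfrac{1}{2}[\eta_i, \eta_k]$ (in particular $\eta_s \wedge \eta_s$) are $\bar\partial$-harmonic. -/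
open scoped BigOperators

theorem stmt_16 (n r : ℕ) (A : Type*) [CommRing A] [Algebra ℂ A]
    (ginv : Fin n → Fin n → A)
    (covD covDb : Fin n → (Matrix (Fin r) (Fin r) A →ₗ[ℂ] Matrix (Fin r) (Fin r) A))
    (hLeibD : ∀ γ (X Y : Matrix (Fin r) (Fin r) A),
      covD γ (X * Y) = covD γ X * Y + X * covD γ Y)
    (hLeibDb : ∀ γ (X Y : Matrix (Fin r) (Fin r) A),
      covDb γ (X * Y) = covDb γ X * Y + X * covDb γ Y)
    (ΘB : Fin n → Fin n → Matrix (Fin r) (Fin r) A)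
    (hflat : ∀ γ β, ΘB γ β = 0)
    (ηi ηk : Fin n → Matrix (Fin r) (Fin r) A)
    (hpar₁ : ∀ γ β, covD γ (ηi β) = 0) (hpar₂ : ∀ γ β, covDb γ (ηi β) = 0)
    (hpar₃ : ∀ γ β, covD γ (ηk β) = 0) (hpar₄ : ∀ γ β, covDb γ (ηk β) = 0)
    (C : Fin n → Fin n → Matrix (Fin r) (Fin r) A)
    (hC : ∀ β δ, C β δ = ηi β * ηk δ - ηi δ * ηk β + ηk β * ηi δ - ηk δ * ηi β) :
    (∀ τ β δ, covDb τ (C β δ) - covDb β (C τ δ) + covDb δ (C τ β) = 0)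
    ∧ (∀ β, (∑ δ, ∑ γ, ginv δ γ • covD γ (C β δ)) = 0) := by
  have hDb : ∀ τ β δ, covDb τ (C β δ) = 0 := by
    intro τ β δ
    simp [hC, map_sub, map_add, hLeibDb, hpar₂, hpar₄]
  have hD : ∀ τ β δ, covD τ (C β δ) = 0 := by
    intro τ β δ
    simp [hC, map_sub, map_add, hLeibD, hpar₁, hpar₃]
  exact ⟨fun τ β δ => by simp [hDb], fun β => by simp [hD]⟩
end
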